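/- Let λ_2(EᵀE) denote the second-smallest eigenvalue (counted with multiplicity) of EᵀE. Suppose x ∈ ℝⁿ satisfies ‖x‖ ≥ 1 and the vector D x has at least one strictly positive entry and at least one strictly negative entry. Then xᵀ A x ≥ (1 / Σ_{i=1}^n r_i) · (λ_2(EᵀE)/n) · min_{1 ≤ i ≤ n} d_i². -/

import Mathlib

open Matrix Real Finset

/-- The orthogonal projection matrix `P = I − g gᵀ` for `g ∈ ℝ²`. -/
noncomputable def proj (g : Fin 2 → ℝ) : Matrix (Fin 2) (Fin 2) ℝ :=
  1 - Matrix.vecMulVec g g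

/-- The 2×2 rotation matrix `R(α)`. -/
noncomputable def Rmat (α : ℝ) : Matrix (Fin 2) (Fin 2) ℝ :=
  !![Real.cos α, -Real.sin α; Real.sin α, Real.cos α]

/-- `x^⊥ := R(π/2) x`. -/
noncomputable def perp (x : Fin 2 → ℝ) : Fin 2 → ℝ :=
  Rmat (Real.pi / 2) *ᵥ x

/-- The matrix `A` whose row `i` has entries
`[A]_{i,i−1} = (1/r_{i−1}) g_iᵀ P_{i−1} g_{i−2}`,
`[A]_{i,i} = (1/r_{i−1}) g_iᵀ P_{i−1} g_i + (1/r_i) g_{i−1}ᵀ P_i g_{i−1}`,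
`[A]_{i,i+1} = (1/r_i) g_{i−1}ᵀ P_i g_{i+1}`, and all other entries of row `i` zero
(indices modulo `n`). -/
noncomputable def Amat (n : ℕ) [NeZero n] (g : ZMod n → Fin 2 → ℝ) (r : ZMod n → ℝ) :
    Matrix (ZMod n) (ZMod n) ℝ := fun i j =>
  (if j = i - 1 then (1 / r (i - 1)) * (g i ⬝ᵥ proj (g (i - 1)) *ᵥ g (i - 2)) else 0) +
  (if j = i then
      (1 / r (i - 1)) * (g i ⬝ᵥ proj (g (i - 1)) *ᵥ g i) +
      (1 / r i) * (g (i - 1) ⬝ᵥ proj (g i) *ᵥ g (i - 1))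
    else 0) +
  (if j = i + 1 then (1 / r i) * (g (i - 1) ⬝ᵥ proj (g i) *ᵥ g (i + 1)) else 0)

/-- The diagonal matrix `D` with diagonal entries `dᵢ = (gᵢ^⊥)ᵀ g_{i−1}`. -/
noncomputable def Dmat (n : ℕ) [NeZero n] (g : ZMod n → Fin 2 → ℝ) :
    Matrix (ZMod n) (ZMod n) ℝ :=
  Matrix.diagonal fun i => perp (g i) ⬝ᵥ g (i - 1)

/-- The incidence matrix `E` of the directed circular graph on `n` vertices:
`[E]_{i,i} = 1`, `[E]_{i,i+1} = −1` (indices modulo `n`), all other entries zero. -/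
def Emat (n : ℕ) [NeZero n] : Matrix (ZMod n) (ZMod n) ℝ := fun i j =>
  if j = i then 1 else if j = i + 1 then -1 else 0

/-!
Write `dᵢ = (gᵢ^⊥)ᵀ g_{i−1}` and `y = D x`. For a unit vector `a` one has
`bᵀ (I − a aᵀ) c = (a^⊥ · b)(a^⊥ · c)`, which turns the quadratic form into
`xᵀ A x = ∑ᵢ (yᵢ − y_{i+1})² / rᵢ ≥ yᵀ EᵀE y / ∑ᵢ rᵢ`. The matrix `EᵀE` is positive semidefinite and
kills the constant vector `𝟙`; expanding `y` in an eigenbasis, every eigenvalue except the smallest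
is at least `λ₂`, and if `λ₂ > 0` the eigenvector of the smallest one is forced to be parallel to
`𝟙`, so `yᵀ EᵀE y ≥ λ₂ (‖y‖² − (∑ yᵢ)² / n)`. Since `y` has entries of both signs, one entry of sign
opposite to `∑ yᵢ` can be dropped before applying Cauchy–Schwarz, giving `(∑ yᵢ)² ≤ (n − 1) ‖y‖²`;
finally `‖y‖² ≥ minᵢ dᵢ² ‖x‖² ≥ minᵢ dᵢ²`.
-/

namespace Matrix

section Spectral

variable {ι : Type*} [Fintype ι] [DecidableEq ι]

lemma transpose_mulVec_dotProduct_transpose_mulVec {R : Type*} [CommSemiring R]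
    {U : Matrix ι ι R} (hU : U * Uᵀ = 1) (v w : ι → R) :
    (Uᵀ *ᵥ v) ⬝ᵥ (Uᵀ *ᵥ w) = v ⬝ᵥ w := by
  rw [dotProduct_mulVec, vecMul_transpose, mulVec_mulVec, hU, one_mulVec]

lemma IsHermitian.eigenvectorUnitary_mul_transpose {M : Matrix ι ι ℝ} (hM : M.IsHermitian) :
    (hM.eigenvectorUnitary : Matrix ι ι ℝ) * (hM.eigenvectorUnitary : Matrix ι ι ℝ)ᵀ = 1 := by
  rw [← conjTranspose_eq_transpose_of_trivial, ← star_eq_conjTranspose]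
  exact Unitary.coe_mul_star_self _

lemma IsHermitian.dotProduct_mulVec_eq_sum_eigenvalues {M : Matrix ι ι ℝ} (hM : M.IsHermitian)
    (y : ι → ℝ) :
    y ⬝ᵥ M *ᵥ y =
      ∑ k, hM.eigenvalues k * ((hM.eigenvectorUnitary : Matrix ι ι ℝ)ᵀ *ᵥ y) k ^ 2 := by
  set U := (hM.eigenvectorUnitary : Matrix ι ι ℝ)
  have hM' : M = U * diagonal hM.eigenvalues * Uᵀ := by
    conv_lhs => rw [hM.spectral_theorem]
    simp [U, Unitary.conjStarAlgAut_apply, star_eq_conjTranspose]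
  conv_lhs => rw [hM']
  rw [← mulVec_mulVec, ← mulVec_mulVec, dotProduct_mulVec, ← mulVec_transpose, dotProduct]
  exact Finset.sum_congr rfl fun k _ => by rw [mulVec_diagonal]; ring

theorem PosSemidef.mul_sub_le_dotProduct_mulVec {M : Matrix ι ι ℝ} (hM : M.PosSemidef)
    {v : ι → ℝ} (hv : M *ᵥ v = 0) (hv0 : v ≠ 0) {γ : ℝ} (hγ : 0 ≤ γ) {k₀ : ι}
    (hgap : ∀ k ≠ k₀, γ ≤ hM.isHermitian.eigenvalues k) (y : ι → ℝ) :
    γ * (y ⬝ᵥ y - (y ⬝ᵥ v) ^ 2 / (v ⬝ᵥ v)) ≤ y ⬝ᵥ M *ᵥ y := by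
  rcases hγ.eq_or_lt with rfl | hγ
  · simpa using hM.dotProduct_mulVec_nonneg y
  set ev := hM.isHermitian.eigenvalues
  set U := (hM.isHermitian.eigenvectorUnitary : Matrix ι ι ℝ)
  have hU : U * Uᵀ = 1 := hM.isHermitian.eigenvectorUnitary_mul_transpose
  have hquad := hM.isHermitian.dotProduct_mulVec_eq_sum_eigenvalues
  have hterm_nonneg : ∀ w k, 0 ≤ ev k * (Uᵀ *ᵥ w) k ^ 2 := fun w k =>
    mul_nonneg (hM.eigenvalues_nonneg k) (sq_nonneg _)
  set b := Uᵀ *ᵥ v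
  -- `v` lies in the kernel, so its coordinates vanish on the eigenvalues `≥ γ > 0`.
  have hb : ∀ k ≠ k₀, b k = 0 := by
    have hsum : ∑ k, ev k * b k ^ 2 = 0 := by rw [← hquad, hv, dotProduct_zero]
    intro k hk
    have hk' := (Finset.sum_eq_zero_iff_of_nonneg fun k _ => hterm_nonneg v k).mp hsum k
      (mem_univ k)
    exact pow_eq_zero_iff two_ne_zero |>.mp
      ((mul_eq_zero.mp hk').resolve_left (hγ.trans_le (hgap k hk)).ne')
  have hdot_v : ∀ w, w ⬝ᵥ v = (Uᵀ *ᵥ w) k₀ * b k₀ := fun w => by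
    rw [← transpose_mulVec_dotProduct_transpose_mulVec hU, dotProduct,
      Finset.sum_eq_single k₀ (fun k _ hk => mul_eq_zero_of_right _ (hb k hk)) (by simp)]
  have hvv : v ⬝ᵥ v = b k₀ ^ 2 := by rw [hdot_v, sq]
  have hb₀ : b k₀ ≠ 0 := fun h => hv0 (dotProduct_self_eq_zero.mp (by rw [hvv, h]; ring))
  set c := Uᵀ *ᵥ y
  have hproj : (y ⬝ᵥ v) ^ 2 / (v ⬝ᵥ v) = c k₀ ^ 2 := by
    rw [hdot_v, hvv, mul_pow, mul_div_cancel_right₀ _ (pow_ne_zero 2 hb₀)]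
  have hyy : y ⬝ᵥ y = ∑ k, c k ^ 2 := by
    rw [← transpose_mulVec_dotProduct_transpose_mulVec hU y y]
    exact Finset.sum_congr rfl fun k _ => (sq _).symm
  rw [hproj, hyy, ← Finset.sum_erase_eq_sub (mem_univ k₀), mul_sum, hquad]
  calc ∑ k ∈ univ.erase k₀, γ * c k ^ 2
      ≤ ∑ k ∈ univ.erase k₀, ev k * c k ^ 2 :=
        sum_le_sum fun k hk =>
          mul_le_mul_of_nonneg_right (hgap k (ne_of_mem_erase hk)) (sq_nonneg _)
    _ ≤ ∑ k, ev k * c k ^ 2 :=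
        sum_le_sum_of_subset_of_nonneg (subset_univ _) fun k _ _ => hterm_nonneg y k

end Spectral

end Matrix

section Sums

variable {ι : Type*} [Fintype ι]

lemma sq_sum_le_card_sub_one_mul_sum_sq_of_neg {y : ι → ℝ} {q : ι} (hq : y q < 0)
    (hsum : 0 ≤ ∑ i, y i) : (∑ i, y i) ^ 2 ≤ (Fintype.card ι - 1 : ℝ) * ∑ i, y i ^ 2 := by
  classical
  have hcard_pos : 0 < Fintype.card ι := Fintype.card_pos_iff.mpr ⟨q⟩
  have hq' : q ∈ univ := mem_univ q
  have hdrop : ∑ i, y i ≤ ∑ i ∈ univ.erase q, y i := by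
    rw [sum_erase_eq_sub hq']
    linarith
  have hcard : ((univ.erase q).card : ℝ) = Fintype.card ι - 1 := by
    rw [card_erase_of_mem hq', card_univ, Nat.cast_pred hcard_pos]
  calc (∑ i, y i) ^ 2 ≤ (∑ i ∈ univ.erase q, y i) ^ 2 := pow_le_pow_left₀ hsum hdrop 2
    _ ≤ (univ.erase q).card * ∑ i ∈ univ.erase q, y i ^ 2 := sq_sum_le_card_mul_sum_sq
    _ ≤ (Fintype.card ι - 1 : ℝ) * ∑ i, y i ^ 2 := by
        rw [hcard]
        refine mul_le_mul_of_nonneg_left ?_ (sub_nonneg.mpr (Nat.one_le_cast.mpr hcard_pos))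
        exact sum_le_sum_of_subset_of_nonneg (erase_subset q univ) fun i _ _ => sq_nonneg _

lemma sq_sum_le_card_sub_one_mul_sum_sq {y : ι → ℝ} (hpos : ∃ i, 0 < y i)
    (hneg : ∃ i, y i < 0) : (∑ i, y i) ^ 2 ≤ (Fintype.card ι - 1 : ℝ) * ∑ i, y i ^ 2 := by
  rcases le_total 0 (∑ i, y i) with hsum | hsum
  · obtain ⟨q, hq⟩ := hneg
    exact sq_sum_le_card_sub_one_mul_sum_sq_of_neg hq hsum
  · obtain ⟨p, hp⟩ := hpos
    simpa [neg_sq] using sq_sum_le_card_sub_one_mul_sum_sq_of_neg (y := -y) (q := p)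
      (by simpa using hp) (by simpa using hsum)

lemma one_div_sum_mul_sum_le_sum_one_div_mul {r a : ι → ℝ} (hr : ∀ i, 0 < r i)
    (ha : ∀ i, 0 ≤ a i) : (1 / ∑ i, r i) * ∑ i, a i ≤ ∑ i, (1 / r i) * a i := by
  rw [mul_sum]
  refine sum_le_sum fun i _ => mul_le_mul_of_nonneg_right ?_ (ha i)
  exact one_div_le_one_div_of_le (hr i) (single_le_sum (fun j _ => (hr j).le) (mem_univ i))

end Sums

lemma Monotone.apply_one_le_of_ne_zero {α : Type*} [Preorder α] {n : ℕ} {μ : Fin n → α}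
    (hμ : Monotone μ) (h1 : 1 < n) {j : Fin n} (hj : j ≠ ⟨0, by omega⟩) : μ ⟨1, h1⟩ ≤ μ j :=
  hμ <| Fin.le_def.mpr <| Nat.one_le_iff_ne_zero.mpr fun h => hj (Fin.ext h)

lemma perp_apply (x : Fin 2 → ℝ) : perp x = ![-x 1, x 0] := by
  ext i
  fin_cases i <;> simp [perp, Rmat, mulVec, dotProduct, Fin.sum_univ_two]

lemma perp_dotProduct_comm (a b : Fin 2 → ℝ) : perp a ⬝ᵥ b = -(perp b ⬝ᵥ a) := by
  simp [perp_apply, dotProduct, Fin.sum_univ_two]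
  ring

lemma dotProduct_proj_mulVec {a : Fin 2 → ℝ} (ha : a ⬝ᵥ a = 1) (b c : Fin 2 → ℝ) :
    b ⬝ᵥ proj a *ᵥ c = (perp a ⬝ᵥ b) * (perp a ⬝ᵥ c) := by
  simp only [dotProduct, Fin.sum_univ_two] at ha
  simp [proj, perp_apply, dotProduct, mulVec, vecMulVec_apply, one_apply, Fin.sum_univ_two]
  linear_combination (-(b 0 * c 0 + b 1 * c 1)) * ha

section Cyclic

variable {n : ℕ} [NeZero n]

noncomputable def dEntry (g : ZMod n → Fin 2 → ℝ) (i : ZMod n) : ℝ :=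
  perp (g i) ⬝ᵥ g (i - 1)

lemma Dmat_mulVec_apply (g : ZMod n → Fin 2 → ℝ) (x : ZMod n → ℝ) (i : ZMod n) :
    (Dmat n g *ᵥ x) i = dEntry g i * x i := by
  simp [Dmat, dEntry, mulVec_diagonal]

lemma Amat_apply {g : ZMod n → Fin 2 → ℝ} (hg : ∀ i, g i ⬝ᵥ g i = 1) (r : ZMod n → ℝ)
    (i j : ZMod n) :
    Amat n g r i j =
      (if j = i - 1 then -(1 / r (i - 1)) * dEntry g i * dEntry g (i - 1) else 0) +
      (if j = i then (1 / r (i - 1) + 1 / r i) * dEntry g i ^ 2 else 0) +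
      (if j = i + 1 then -(1 / r i) * dEntry g i * dEntry g (i + 1) else 0) := by
  have hprev : g i ⬝ᵥ proj (g (i - 1)) *ᵥ g (i - 2) = -(dEntry g i * dEntry g (i - 1)) := by
    rw [dotProduct_proj_mulVec (hg _), perp_dotProduct_comm (g (i - 1)), dEntry, dEntry,
      show i - 2 = i - 1 - 1 by ring]
    ring
  have hself : g i ⬝ᵥ proj (g (i - 1)) *ᵥ g i = dEntry g i ^ 2 := by
    rw [dotProduct_proj_mulVec (hg _), perp_dotProduct_comm (g (i - 1)), dEntry]
    ring
  have hself' : g (i - 1) ⬝ᵥ proj (g i) *ᵥ g (i - 1) = dEntry g i ^ 2 := by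
    rw [dotProduct_proj_mulVec (hg _), dEntry]
    ring
  have hnext : g (i - 1) ⬝ᵥ proj (g i) *ᵥ g (i + 1) = -(dEntry g i * dEntry g (i + 1)) := by
    rw [dotProduct_proj_mulVec (hg _), perp_dotProduct_comm (g i) (g (i + 1)), dEntry, dEntry,
      add_sub_cancel_right, mul_neg]
  simp only [Amat, hprev, hself, hself', hnext]
  split_ifs <;> ring

theorem dotProduct_Amat_mulVec {g : ZMod n → Fin 2 → ℝ} (hg : ∀ i, g i ⬝ᵥ g i = 1)
    (r : ZMod n → ℝ) (x : ZMod n → ℝ) :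
    x ⬝ᵥ Amat n g r *ᵥ x =
      ∑ i, (1 / r i) * ((Dmat n g *ᵥ x) i - (Dmat n g *ᵥ x) (i + 1)) ^ 2 := by
  set d := dEntry g
  let F : ZMod n → ℝ := fun i =>
    (1 / r (i - 1)) * (d i ^ 2 * x i ^ 2 - d i * d (i - 1) * x i * x (i - 1))
  let G : ZMod n → ℝ := fun i =>
    (1 / r i) * (d i ^ 2 * x i ^ 2 - d i * d (i + 1) * x i * x (i + 1))
  calc x ⬝ᵥ Amat n g r *ᵥ x = ∑ i, (F i + G i) := by
        refine Finset.sum_congr rfl fun i _ => ?_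
        simp only [mulVec, dotProduct, Amat_apply hg, add_mul, ite_mul, zero_mul,
          Finset.sum_add_distrib, Finset.sum_ite_eq', Finset.mem_univ, if_true, F, G]
        ring
    _ = ∑ i, (F (i + 1) + G i) := by
        rw [Finset.sum_add_distrib, Finset.sum_add_distrib,
          ← Equiv.sum_comp (Equiv.addRight 1) F]
        rfl
    _ = _ := by
        refine Finset.sum_congr rfl fun i _ => ?_
        simp only [Dmat_mulVec_apply, F, G, add_sub_cancel_right]
        ring

lemma inf'_sq_dEntry_mul_le_sum_sq (g : ZMod n → Fin 2 → ℝ) (x : ZMod n → ℝ) :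
    univ.inf' univ_nonempty (fun i => dEntry g i ^ 2) * ∑ i, x i ^ 2 ≤
      ∑ i, (Dmat n g *ᵥ x) i ^ 2 := by
  rw [mul_sum]
  refine sum_le_sum fun i _ => ?_
  rw [Dmat_mulVec_apply, mul_pow]
  exact mul_le_mul_of_nonneg_right (inf'_le _ (mem_univ i)) (sq_nonneg _)

end Cyclic

section Incidence

variable {n : ℕ} [NeZero n]

lemma Emat_mulVec_apply (hn : n ≠ 1) (v : ZMod n → ℝ) (i : ZMod n) :
    (Emat n *ᵥ v) i = v i - v (i + 1) := by
  have hi : i + 1 ≠ i := by simpa [add_eq_left] using (ZMod.one_eq_zero_iff).not.mpr hn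
  simp [Emat, mulVec, dotProduct, ite_mul, Finset.sum_ite, Finset.filter_ne', Finset.filter_eq',
    hi, sub_eq_add_neg]

lemma Emat_mulVec_one (hn : n ≠ 1) : Emat n *ᵥ 1 = 0 := by
  ext i
  simp [Emat_mulVec_apply hn]

lemma dotProduct_transpose_mul_Emat_mulVec (hn : n ≠ 1) (v : ZMod n → ℝ) :
    v ⬝ᵥ ((Emat n)ᵀ * Emat n) *ᵥ v = ∑ i, (v i - v (i + 1)) ^ 2 := by
  rw [← mulVec_mulVec, dotProduct_mulVec, vecMul_transpose, dotProduct]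
  simp only [Emat_mulVec_apply hn, sq]

lemma posSemidef_transpose_mul_Emat : ((Emat n)ᵀ * Emat n).PosSemidef := by
  simpa only [conjTranspose_eq_transpose_of_trivial] using
    posSemidef_conjTranspose_mul_self (Emat n)

theorem second_eigenvalue_mul_le_sum_sq_sub_add_one (h1 : 1 < n)
    (hH : ((Emat n)ᵀ * Emat n).IsHermitian) {μ : Fin n → ℝ} (hmono : Monotone μ) (σ : Fin n ≃ ZMod n)
    (hσ : ∀ i, μ i = hH.eigenvalues (σ i)) (y : ZMod n → ℝ) :
    μ ⟨1, h1⟩ * (∑ i, y i ^ 2 - (∑ i, y i) ^ 2 / n) ≤ ∑ i, (y i - y (i + 1)) ^ 2 := by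
  have hn1 : n ≠ 1 := h1.ne'
  have hL := posSemidef_transpose_mul_Emat (n := n)
  have hμ₁ : 0 ≤ μ ⟨1, h1⟩ := by
    rw [hσ]
    exact hL.eigenvalues_nonneg _
  have hgap : ∀ k ≠ σ ⟨0, by omega⟩, μ ⟨1, h1⟩ ≤ hL.isHermitian.eigenvalues k := by
    intro k hk
    rw [← σ.apply_symm_apply k, ← hσ]
    exact hmono.apply_one_le_of_ne_zero _ (by rwa [Ne, σ.symm_apply_eq])
  have hker : ((Emat n)ᵀ * Emat n) *ᵥ 1 = 0 := by
    rw [← mulVec_mulVec, Emat_mulVec_one hn1, mulVec_zero]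
  have hspec := hL.mul_sub_le_dotProduct_mulVec hker one_ne_zero hμ₁ hgap y
  rw [dotProduct_transpose_mul_Emat_mulVec hn1, dotProduct_one, dotProduct_one] at hspec
  simpa only [Pi.one_apply, sum_const, card_univ, ZMod.card, nsmul_eq_mul, mul_one, dotProduct,
    sq] using hspec

end Incidence

/-- Let `λ₂(EᵀE) = μ 1` denote the second-smallest eigenvalue (with multiplicity) of `EᵀE`,
where `μ` lists the eigenvalues of `EᵀE` in nondecreasing order. If `x ∈ ℝⁿ` satisfies
`‖x‖ ≥ 1` and `D x` has at least one strictly positive and one strictly negative entry, then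
`xᵀ A x ≥ (1 / Σᵢ rᵢ) · (λ₂(EᵀE)/n) · minᵢ dᵢ²`. -/
theorem stmt10 (n : ℕ) [NeZero n] (hn : 3 ≤ n)
    (g : ZMod n → Fin 2 → ℝ) (hg : ∀ i, g i ⬝ᵥ g i = 1)
    (r : ZMod n → ℝ) (hr : ∀ i, 0 < r i)
    (hH : ((Emat n)ᵀ * Emat n).IsHermitian)
    (μ : Fin n → ℝ) (hmono : Monotone μ)
    (hperm : ∃ σ : Fin n ≃ ZMod n, ∀ i, μ i = hH.eigenvalues (σ i))
    (x : ZMod n → ℝ) (hx : 1 ≤ Real.sqrt (∑ i, x i ^ 2))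
    (hpos : ∃ i, 0 < (Dmat n g *ᵥ x) i) (hneg : ∃ i, (Dmat n g *ᵥ x) i < 0) :
    (1 / ∑ i, r i) * (μ ⟨1, by omega⟩ / n) *
        (Finset.univ.inf' Finset.univ_nonempty
          fun i : ZMod n => (perp (g i) ⬝ᵥ g (i - 1)) ^ 2) ≤
      x ⬝ᵥ Amat n g r *ᵥ x := by
  set y := Dmat n g *ᵥ x
  set m := univ.inf' univ_nonempty fun i => dEntry g i ^ 2
  obtain ⟨σ, hσ⟩ := hperm
  have hμ₁ : 0 ≤ μ ⟨1, by omega⟩ := by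
    rw [hσ]
    exact posSemidef_transpose_mul_Emat.eigenvalues_nonneg _
  have hmin : m ≤ ∑ i, y i ^ 2 :=
    le_trans (le_mul_of_one_le_right (le_inf' _ _ fun i _ => sq_nonneg _) (Real.one_le_sqrt.mp hx))
      (inf'_sq_dEntry_mul_le_sum_sq g x)
  have hmix := sq_sum_le_card_sub_one_mul_sum_sq hpos hneg
  rw [ZMod.card] at hmix
  have hcoef : m / n ≤ ∑ i, y i ^ 2 - (∑ i, y i) ^ 2 / n := by
    rw [le_sub_iff_add_le, ← add_div, div_le_iff₀ (by positivity)]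
    linarith
  have hS : 0 ≤ 1 / ∑ i, r i := one_div_nonneg.mpr (sum_nonneg fun i _ => (hr i).le)
  calc (1 / ∑ i, r i) * (μ ⟨1, by omega⟩ / n) * m
      = (1 / ∑ i, r i) * (μ ⟨1, by omega⟩ * (m / n)) := by ring
    _ ≤ (1 / ∑ i, r i) * ∑ i, (y i - y (i + 1)) ^ 2 :=
        mul_le_mul_of_nonneg_left ((mul_le_mul_of_nonneg_left hcoef hμ₁).trans
          (second_eigenvalue_mul_le_sum_sq_sub_add_one (by omega) hH hmono σ hσ y)) hS
    _ ≤ ∑ i, (1 / r i) * (y i - y (i + 1)) ^ 2 :=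
        one_div_sum_mul_sum_le_sum_one_div_mul hr fun _ => sq_nonneg _
    _ = x ⬝ᵥ Amat n g r *ᵥ x := (dotProduct_Amat_mulVec hg r x).symm
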